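/- Let q be a power of an odd prime and m a positive integer with gcd(C(m,2), q−1) = 1. Let s1 be a nonzero F_q-linear combination of the elementary symmetric polynomials σ_m^0,…,σ_m^m, let λ ∈ F_q be nonzero, and set F := s1·v_m + λ·s1. Then the number of distinguished zeros of F in F_q^m satisfies |Z_D(F)| ≤ P(q,m)/(q−1) + m·P(q−1,m−1) (as an inequality of real numbers). -/

import Mathlib

open MvPolynomial

/-- The Vandermonde polynomial `v_m = ∏_{i<j} (x_i - x_j)` in `m` variables. -/
noncomputable def vand (K : Type*) [CommRing K] (m : ℕ) : MvPolynomial (Fin m) K :=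
  ∏ p ∈ Finset.univ.filter (fun p : Fin m × Fin m => p.1 < p.2), (X p.1 - X p.2)

/-- `s` is a linear combination of the elementary symmetric polynomials
`σ_m^0, …, σ_m^m`. -/
def IsElemSymmComb {K : Type*} [CommSemiring K] {m : ℕ}
    (s : MvPolynomial (Fin m) K) : Prop :=
  ∃ a : Fin (m + 1) → K, s = ∑ i : Fin (m + 1), C (a i) * esymm (Fin m) K (i : ℕ)

/-- `P(q,m) = C(q,m)·m!` (which is `0` when `m > q`). -/
def Pnum (q m : ℕ) : ℕ := q.choose m * m.factorial


open Finset

def esum {F : Type} [CommRing F] (m i : ℕ) (x : Fin m → F) : F :=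
  ∑ t ∈ Finset.powersetCard i (univ : Finset (Fin m)), ∏ j ∈ t, x j

lemma esum_succ {F : Type} [CommRing F] (m i : ℕ) (x : Fin (m+1) → F) :
    esum (m+1) (i+1) x
      = esum m (i+1) (x ∘ Fin.castSucc) + x (Fin.last m) * esum m i (x ∘ Fin.castSucc) := by
  classical
  have hnot : Fin.last m ∉ (univ : Finset (Fin m)).map Fin.castSuccEmb := by
    simp only [Finset.mem_map, Finset.mem_univ, true_and]
    rintro ⟨j, hj⟩
    exact (Fin.castSucc_lt_last j).ne hj
  have huniv : (univ : Finset (Fin (m+1)))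
      = insert (Fin.last m) ((univ : Finset (Fin m)).map Fin.castSuccEmb) := by
    rw [Fin.univ_castSuccEmb, Finset.cons_eq_insert]
  rw [esum, huniv, Finset.powersetCard_succ_insert hnot, Finset.sum_union]
  · congr 1
    · rw [esum, Finset.powersetCard_map, Finset.sum_map]
      apply Finset.sum_congr rfl
      intro t _
      show ∏ j ∈ t.map Fin.castSuccEmb, x j = _
      rw [Finset.prod_map]
      rfl
    · rw [Finset.sum_image, esum, Finset.mul_sum, Finset.powersetCard_map, Finset.sum_map]
      · apply Finset.sum_congr rfl
        intro t _
        show ∏ j ∈ insert (Fin.last m) (t.map Fin.castSuccEmb), x j = _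
        have hlt : Fin.last m ∉ t.map Fin.castSuccEmb := by
          simp only [Finset.mem_map]
          rintro ⟨j, _, hj⟩
          exact (Fin.castSucc_lt_last j).ne hj
        rw [Finset.prod_insert hlt, Finset.prod_map]
        rfl
      · intro t ht u hu htu
        have hmem : ∀ s ∈ Finset.powersetCard i ((univ : Finset (Fin m)).map Fin.castSuccEmb),
            Fin.last m ∉ s := by
          intro s hs hin
          rw [Finset.mem_powersetCard] at hs
          exact hnot (hs.1 hin)
        have h1 := hmem t ht; have h2 := hmem u hu
        ext z
        constructor
        · intro hz
          have : z ∈ insert (Fin.last m) u := htu ▸ Finset.mem_insert_of_mem hz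
          rcases Finset.mem_insert.1 this with h | h
          · exact absurd (h ▸ hz) h1
          · exact h
        · intro hz
          have : z ∈ insert (Fin.last m) t := htu.symm ▸ Finset.mem_insert_of_mem hz
          rcases Finset.mem_insert.1 this with h | h
          · exact absurd (h ▸ hz) h2
          · exact h
  · rw [Finset.disjoint_left]
    intro t ht ht'
    rw [Finset.mem_powersetCard] at ht
    obtain ⟨u, _, rfl⟩ := Finset.mem_image.1 ht'
    exact hnot (ht.1 (Finset.mem_insert_self _ _))

lemma esum_zero' {F : Type} [CommRing F] (m : ℕ) (x : Fin m → F) : esum m 0 x = 1 := by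
  simp [esum]

lemma esum_top {F : Type} [CommRing F] {m i : ℕ} (hi : m < i) (x : Fin m → F) : esum m i x = 0 := by
  rw [esum, Finset.powersetCard_eq_empty.2 (by simpa using hi), Finset.sum_empty]

def Scomb {F : Type} [CommRing F] (m : ℕ) (a : ℕ → F) (x : Fin m → F) : F :=
  ∑ i ∈ Finset.range (m+1), a i * esum m i x

lemma Scomb_succ {F : Type} [CommRing F] (m : ℕ) (a : ℕ → F) (x : Fin (m+1) → F) :
    Scomb (m+1) a x
      = Scomb m a (x ∘ Fin.castSucc)
        + x (Fin.last m) * Scomb m (fun i => a (i+1)) (x ∘ Fin.castSucc) := by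
  have e2 : ∑ i ∈ Finset.range (m+1), a (i+1) * esum m (i+1) (x ∘ Fin.castSucc)
      = ∑ i ∈ Finset.range m, a (i+1) * esum m (i+1) (x ∘ Fin.castSucc) := by
    rw [Finset.sum_range_succ, esum_top (Nat.lt_succ_self m), mul_zero, add_zero]
  rw [Scomb, Finset.sum_range_succ']
  simp only [esum_succ]
  rw [show (∑ i ∈ Finset.range (m+1),
        a (i+1) * (esum m (i+1) (x ∘ Fin.castSucc)
          + x (Fin.last m) * esum m i (x ∘ Fin.castSucc)))
      = (∑ i ∈ Finset.range (m+1), a (i+1) * esum m (i+1) (x ∘ Fin.castSucc))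
        + x (Fin.last m) * Scomb m (fun i => a (i+1)) (x ∘ Fin.castSucc) from by
    rw [Scomb, Finset.mul_sum, ← Finset.sum_add_distrib]
    exact Finset.sum_congr rfl fun i _ => by ring]
  rw [e2, show Scomb m a (x ∘ Fin.castSucc)
      = ∑ i ∈ Finset.range m, a (i+1) * esum m (i+1) (x ∘ Fin.castSucc)
        + a 0 * esum m 0 (x ∘ Fin.castSucc) from Finset.sum_range_succ' _ m]
  rw [esum_zero', esum_zero']
  ring

lemma arith_key (q m A B : ℕ) (h : m + 1 ≤ q) (hAB : A + B ≤ Nat.descFactorial q m)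
    (hB : B ≤ m * Nat.descFactorial (q - 1) (m - 1)) :
    A + B * (q - m) ≤ (m + 1) * Nat.descFactorial (q - 1) m := by
  cases m with
  | zero =>
      have hB0 : B = 0 := by simpa using hB
      subst hB0
      simp [Nat.descFactorial] at hAB ⊢
      omega
  | succ k =>
      obtain ⟨r, rfl⟩ : ∃ r, q = k + 2 + r := ⟨q - (k+2), by omega⟩
      have h1 : Nat.descFactorial (k + 2 + r) (k + 1)
          = (k + 2 + r) * Nat.descFactorial (k + 1 + r) k := by
        rw [show k + 2 + r = (k + 1 + r) + 1 by ring, Nat.succ_descFactorial_succ]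
      have h2 : k + 2 + r - 1 = k + 1 + r := by omega
      have h3 : Nat.descFactorial (k + 1 + r) (k + 1)
          = (r + 1) * Nat.descFactorial (k + 1 + r) k := by
        rw [Nat.descFactorial_succ]; congr 1; omega
      rw [h2] at hB ⊢
      rw [h1] at hAB
      rw [h3]
      simp only [Nat.add_sub_cancel] at hB
      have h4 : k + 2 + r - (k + 1) = r + 1 := by omega
      rw [h4]
      nlinarith [Nat.descFactorial (k + 1 + r) k]

open Finset in
lemma card_inj_filter (F : Type) [Field F] [Fintype F] [DecidableEq F] (m : ℕ) :
    #(univ.filter (fun x : Fin m → F => Function.Injective x))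
      = (Fintype.card F).descFactorial m := by
  rw [← Fintype.card_subtype, Fintype.card_congr (Equiv.subtypeInjectiveEquivEmbedding (Fin m) F),
    Fintype.card_embedding_eq, Fintype.card_fin]

open Finset in
lemma zeros_bound (F : Type) [Field F] [Fintype F] [DecidableEq F] :
    ∀ (m : ℕ) (a : ℕ → F), (∃ i < m + 1, a i ≠ 0) →
      #(univ.filter (fun x : Fin m → F => Function.Injective x ∧ Scomb m a x = 0))
        ≤ m * Nat.descFactorial (Fintype.card F - 1) (m - 1) := by
  intro m
  induction m with
  | zero =>
      intro a ha
      obtain ⟨i, hi, hai⟩ := ha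
      interval_cases i
      have : ∀ x : Fin 0 → F, Scomb 0 a x = a 0 := by
        intro x; simp [Scomb, esum_zero']
      rw [Finset.card_eq_zero.2]
      · simp
      · ext x
        simp [this, hai]
  | succ m IH =>
      intro a ha
      set q := Fintype.card F with hqdef
      by_cases hq : m + 1 ≤ q
      · -- main case
        by_cases hsh : ∃ i < m + 1, a (i + 1) ≠ 0
        · set w : (Fin m → F) → F := Scomb m (fun i => a (i + 1)) with hw
          set u : (Fin m → F) → F := Scomb m a with hu
          set I := univ.filter (fun y : Fin m → F => Function.Injective y) with hI
          set Y0 := I.filter (fun y => w y = 0) with hY0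
          set Y1 := I.filter (fun y => ¬ w y = 0) with hY1
          set W2 := univ.filter
            (fun p : (Fin m → F) × F => Function.Injective p.1 ∧ w p.1 = 0
              ∧ p.2 ∉ Finset.image p.1 univ) with hW2
          have hsplit : ∀ x : Fin (m+1) → F, Scomb (m+1) a x
              = u (x ∘ Fin.castSucc) + x (Fin.last m) * w (x ∘ Fin.castSucc) :=
            fun x => Scomb_succ m a x
          -- step 1 : injection
          have step1 : #(univ.filter (fun x : Fin (m+1) → F =>
              Function.Injective x ∧ Scomb (m+1) a x = 0)) ≤ #Y1 + #W2 := by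
            rw [← Finset.card_disjSum]
            apply Finset.card_le_card_of_injOn
              (fun x => if w (x ∘ Fin.castSucc) = 0
                then Sum.inr (x ∘ Fin.castSucc, x (Fin.last m))
                else Sum.inl (x ∘ Fin.castSucc))
            · intro x hx
              simp only [Finset.mem_coe] at hx ⊢
              rw [Finset.mem_filter] at hx
              obtain ⟨-, hxi, hxz⟩ := hx
              have hyi : Function.Injective (x ∘ Fin.castSucc) :=
                hxi.comp (Fin.castSucc_injective m)
              rw [hsplit] at hxz
              by_cases h0 : w (x ∘ Fin.castSucc) = 0
              · rw [if_pos h0]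
                apply Finset.inr_mem_disjSum.2
                rw [hW2, Finset.mem_filter]
                refine ⟨Finset.mem_univ _, hyi, h0, ?_⟩
                intro hmem
                obtain ⟨j, -, hj⟩ := Finset.mem_image.1 hmem
                exact (Fin.castSucc_lt_last j).ne (hxi hj)
              · rw [if_neg h0]
                apply Finset.inl_mem_disjSum.2
                rw [hY1, Finset.mem_filter, hI, Finset.mem_filter]
                exact ⟨⟨Finset.mem_univ _, hyi⟩, h0⟩
            · intro x1 hx1 x2 hx2 heq
              simp only [Finset.coe_filter, Set.mem_setOf_eq] at hx1 hx2
              obtain ⟨-, hx1i, hx1z⟩ := hx1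
              obtain ⟨-, hx2i, hx2z⟩ := hx2
              rw [hsplit] at hx1z hx2z
              have ext_aux : x1 ∘ Fin.castSucc = x2 ∘ Fin.castSucc
                  → x1 (Fin.last m) = x2 (Fin.last m) → x1 = x2 := by
                intro h1 h2
                funext i
                refine Fin.lastCases h2 (fun j => ?_) i
                exact congrFun h1 j
              by_cases h1 : w (x1 ∘ Fin.castSucc) = 0
                <;> by_cases h2 : w (x2 ∘ Fin.castSucc) = 0
                <;> simp only [if_pos, if_neg, h1, h2, if_true, if_false] at heq
              · have h' : x1 ∘ Fin.castSucc = x2 ∘ Fin.castSucc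
                    ∧ x1 (Fin.last m) = x2 (Fin.last m) := by
                  simpa [Prod.ext_iff] using heq
                exact ext_aux h'.1 h'.2
              · exact absurd heq (by simp)
              · exact absurd heq (by simp)
              · have hy : x1 ∘ Fin.castSucc = x2 ∘ Fin.castSucc := by
                  simpa using heq
                apply ext_aux hy
                rw [hy] at hx1z
                have := hx1z.trans hx2z.symm
                exact mul_right_cancel₀ h2 (add_left_cancel this)
          -- step 2 : cardinalities of Y0, Y1
          have hY : #Y0 + #Y1 = #I :=
            Finset.card_filter_add_card_filter_not _
          have hIcard : #I = q.descFactorial m := card_inj_filter F m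
          -- step 3 : bound W2
          have hsub : W2 ⊆ Y0.biUnion
              (fun y => {y} ×ˢ ((univ : Finset F) \ Finset.image y univ)) := by
            intro p hp
            rw [hW2, Finset.mem_filter] at hp
            obtain ⟨-, hpi, hpw, hpv⟩ := hp
            rw [Finset.mem_biUnion]
            refine ⟨p.1, ?_, ?_⟩
            · rw [hY0, Finset.mem_filter, hI, Finset.mem_filter]
              exact ⟨⟨Finset.mem_univ _, hpi⟩, hpw⟩
            · rw [Finset.mem_product]
              exact ⟨Finset.mem_singleton_self _,
                Finset.mem_sdiff.2 ⟨Finset.mem_univ _, hpv⟩⟩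
          have step3 : #W2 ≤ #Y0 * (q - m) := by
            calc #W2 ≤ #(Y0.biUnion (fun y => {y} ×ˢ ((univ : Finset F) \ Finset.image y univ))) :=
                  Finset.card_le_card hsub
              _ ≤ ∑ y ∈ Y0, #({y} ×ˢ ((univ : Finset F) \ Finset.image y univ)) :=
                  Finset.card_biUnion_le
              _ = ∑ _y ∈ Y0, (q - m) := by
                  apply Finset.sum_congr rfl
                  intro y hy
                  have hyi : Function.Injective y := by
                    rw [hY0, Finset.mem_filter, hI, Finset.mem_filter] at hy
                    exact hy.1.2
                  rw [Finset.card_product, Finset.card_singleton, one_mul,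
                    Finset.card_sdiff_of_subset (Finset.subset_univ _), Finset.card_univ,
                    Finset.card_image_of_injective _ hyi, Finset.card_univ, Fintype.card_fin]
              _ = #Y0 * (q - m) := by rw [Finset.sum_const, smul_eq_mul]
          -- step 4 : IH
          have step4 : #Y0 ≤ m * Nat.descFactorial (q - 1) (m - 1) := by
            have : Y0 = univ.filter
                (fun y : Fin m → F => Function.Injective y ∧ Scomb m (fun i => a (i+1)) y = 0) := by
              rw [hY0, hI, Finset.filter_filter]
            rw [this]
            exact IH (fun i => a (i + 1)) hsh
          -- combine
          have final := arith_key q m (#Y1) (#Y0) hq (by omega) step4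
          simp only [Nat.succ_sub_one]
          calc #(univ.filter (fun x : Fin (m+1) → F =>
                Function.Injective x ∧ Scomb (m+1) a x = 0)) ≤ #Y1 + #W2 := step1
            _ ≤ #Y1 + #Y0 * (q - m) := by omega
            _ ≤ (m + 1) * Nat.descFactorial (q - 1) m := final
        · -- shifted coefficients all vanish : Scomb = a 0 ≠ 0
          push_neg at hsh
          have ha0 : a 0 ≠ 0 := by
            obtain ⟨i, hi, hai⟩ := ha
            cases i with
            | zero => exact hai
            | succ j => exact absurd (hsh j (by omega)) hai
          have hconst : ∀ x : Fin (m+1) → F, Scomb (m+1) a x = a 0 := by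
            intro x
            rw [Scomb, Finset.sum_range_succ']
            rw [Finset.sum_eq_zero, esum_zero', zero_add, mul_one]
            intro i hi
            rw [hsh i (Finset.mem_range.1 hi), zero_mul]
          rw [Finset.card_eq_zero.2]
          · exact Nat.zero_le _
          · ext x
            simp [hconst, ha0]
      · -- m + 1 > q : no injective functions
        rw [Finset.card_eq_zero.2]
        · exact Nat.zero_le _
        · ext x
          simp only [Finset.mem_filter, Finset.mem_univ, true_and, Finset.notMem_empty,
            iff_false, not_and]
          intro hxi
          exact absurd (by simpa using Fintype.card_le_of_injective x hxi) hq

open Finset in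
lemma card_lt_pairs (m : ℕ) :
    #(univ.filter (fun p : Fin m × Fin m => p.1 < p.2)) = m.choose 2 := by
  classical
  have hpc : #(Finset.powersetCard 2 (univ : Finset (Fin m))) = m.choose 2 := by
    rw [Finset.card_powersetCard, Finset.card_univ, Fintype.card_fin]
  rw [← hpc]
  apply Finset.card_bij (fun p _ => ({p.1, p.2} : Finset (Fin m)))
  · intro p hp
    rw [Finset.mem_filter] at hp
    rw [Finset.mem_powersetCard]
    exact ⟨Finset.subset_univ _, Finset.card_pair hp.2.ne⟩
  · intro p hp p' hp' heq
    rw [Finset.mem_filter] at hp hp'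
    have h1 : p.1 ∈ ({p'.1, p'.2} : Finset (Fin m)) := heq ▸ by simp
    have h2 : p.2 ∈ ({p'.1, p'.2} : Finset (Fin m)) := heq ▸ by simp
    have h3 : p'.1 ∈ ({p.1, p.2} : Finset (Fin m)) := heq.symm ▸ by simp
    have h4 : p'.2 ∈ ({p.1, p.2} : Finset (Fin m)) := heq.symm ▸ by simp
    simp only [Finset.mem_insert, Finset.mem_singleton] at h1 h2 h3 h4
    have hlt := hp.2
    have hlt' := hp'.2
    rw [Fin.lt_def] at hlt hlt'
    rw [Prod.ext_iff, Fin.ext_iff, Fin.ext_iff]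
    rcases h1 with ha | ha <;> rcases h2 with hb | hb <;>
      rcases h3 with hc | hc <;> rcases h4 with hd | hd <;>
      rw [Fin.ext_iff] at * <;> omega
  · intro t ht
    rw [Finset.mem_powersetCard] at ht
    obtain ⟨a, b, hab, rfl⟩ := Finset.card_eq_two.1 ht.2
    rcases lt_or_gt_of_ne hab with h | h
    · exact ⟨(a, b), Finset.mem_filter.2 ⟨Finset.mem_univ _, h⟩, rfl⟩
    · exact ⟨(b, a), Finset.mem_filter.2 ⟨Finset.mem_univ _, h⟩, by
        rw [Finset.pair_comm]⟩

open Finset in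
lemma eval_vand_smul {F : Type} [Field F] (m : ℕ) (t : F) (x : Fin m → F) :
    eval (fun i => t * x i) (vand F m) = t ^ (m.choose 2) * eval x (vand F m) := by
  classical
  rw [← card_lt_pairs m, vand]
  simp only [map_prod, map_sub, eval_X]
  rw [← Finset.prod_const, ← Finset.prod_mul_distrib]
  apply Finset.prod_congr rfl
  intro p _
  ring

lemma pow_eq_one_imp {F : Type} [Field F] [Fintype F] {N : ℕ}
    (hgcd : Nat.gcd N (Fintype.card F - 1) = 1) {u : F} (hu : u ≠ 0)
    (h : u ^ N = 1) : u = 1 := by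
  classical
  set U : Fˣ := Units.mk0 u hu with hU
  have hUN : U ^ N = 1 := by
    ext
    push_cast
    simpa [hU] using h
  have h1 : orderOf U ∣ N := orderOf_dvd_of_pow_eq_one hUN
  have h2 : orderOf U ∣ Fintype.card F - 1 := by
    rw [← Fintype.card_units]
    exact orderOf_dvd_card
  have : orderOf U ∣ 1 := hgcd ▸ Nat.dvd_gcd h1 h2
  have hU1 : U = 1 := orderOf_eq_one_iff.1 (Nat.dvd_one.1 this)
  have : (U : F) = ((1 : Fˣ) : F) := by rw [hU1]
  simpa [hU] using this

open Finset in
lemma vand_level_count (F : Type) [Field F] [Fintype F] [DecidableEq F] (m : ℕ)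
    (hgcd : Nat.gcd (m.choose 2) (Fintype.card F - 1) = 1) (c : F) (hc : c ≠ 0) :
    #(univ.filter (fun x : Fin m → F => Function.Injective x ∧ eval x (vand F m) = c))
        * (Fintype.card F - 1)
      ≤ (Fintype.card F).descFactorial m := by
  classical
  set B := univ.filter (fun x : Fin m → F => Function.Injective x ∧ eval x (vand F m) = c)
    with hB
  set T := (univ : Finset F).filter (fun t => t ≠ 0) with hT
  have hTcard : #T = Fintype.card F - 1 := by
    rw [hT, Finset.filter_ne', Finset.card_erase_of_mem (Finset.mem_univ _), Finset.card_univ]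
  rw [← hTcard, ← card_inj_filter F m, mul_comm, ← Finset.card_product]
  apply Finset.card_le_card_of_injOn (fun p => fun i => p.1 * p.2 i)
  · rintro ⟨t, x⟩ hp
    rw [Finset.mem_coe, Finset.mem_product, hT, Finset.mem_filter, hB, Finset.mem_filter] at hp
    obtain ⟨⟨-, ht⟩, -, hxi, -⟩ := hp
    rw [Finset.mem_coe, Finset.mem_filter]
    refine ⟨Finset.mem_univ _, fun i j hij => hxi ?_⟩
    exact mul_left_cancel₀ ht hij
  · rintro ⟨t1, x1⟩ hp1 ⟨t2, x2⟩ hp2 heq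
    rw [Finset.mem_coe, Finset.mem_product, hT, Finset.mem_filter, hB, Finset.mem_filter]
      at hp1 hp2
    obtain ⟨⟨-, ht1⟩, -, hx1i, hx1v⟩ := hp1
    obtain ⟨⟨-, ht2⟩, -, hx2i, hx2v⟩ := hp2
    simp only at heq ht1 ht2 hx1i hx1v hx2i hx2v
    have heval : eval (fun i => t1 * x1 i) (vand F m) = eval (fun i => t2 * x2 i) (vand F m) := by
      rw [heq]
    rw [eval_vand_smul, eval_vand_smul, hx1v, hx2v] at heval
    have ht : t1 ^ (m.choose 2) = t2 ^ (m.choose 2) := mul_right_cancel₀ hc heval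
    have hu : (t1 / t2) ^ (m.choose 2) = 1 := by
      rw [div_pow, ht, div_self (pow_ne_zero _ ht2)]
    have ht12 : t1 = t2 := by
      have := pow_eq_one_imp hgcd (div_ne_zero ht1 ht2) hu
      field_simp at this
      exact this
    subst ht12
    have hx : x1 = x2 := by
      funext i
      have := congrFun heq i
      exact mul_left_cancel₀ ht1 this
    rw [hx]

open Finset in
lemma eval_comb_eq_Scomb {F : Type} [Field F] {m : ℕ} (a : Fin (m+1) → F) (x : Fin m → F) :
    eval x (∑ i : Fin (m + 1), MvPolynomial.C (a i) * esymm (Fin m) F (i : ℕ))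
      = Scomb m (fun i => if h : i < m + 1 then a ⟨i, h⟩ else 0) x := by
  classical
  rw [Scomb, Finset.sum_range, map_sum]
  apply Finset.sum_congr rfl
  intro i _
  rw [map_mul, eval_C, esymm, map_sum]
  have : eval x (∑ t ∈ Finset.powersetCard (i : ℕ) (univ : Finset (Fin m)), ∏ j ∈ t, X j)
      = esum m (i : ℕ) x := by
    rw [map_sum, esum]
    exact Finset.sum_congr rfl fun t _ => by rw [map_prod]; simp
  rw [dif_pos i.isLt, Fin.eta, esum]
  congr 1
  exact Finset.sum_congr rfl fun t _ => by rw [map_prod]; simp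

lemma Pnum_eq (q m : ℕ) : Pnum q m = q.descFactorial m := by
  rw [Pnum, Nat.descFactorial_eq_factorial_mul_choose, mul_comm]

/-- Linearly dependent case, `gcd(C(m,2), q-1) = 1`: bound on the number of
distinguished zeros of `F = s1·v_m + λ·s1`. -/
theorem stmt6 (q m : ℕ) (F : Type) [Field F] [Fintype F]
    (hcard : Fintype.card F = q)
    (hq : ∃ p n : ℕ, p.Prime ∧ Odd p ∧ 0 < n ∧ q = p ^ n)
    (hm : 0 < m) (hgcd : Nat.gcd (m.choose 2) (q - 1) = 1)
    (s1 : MvPolynomial (Fin m) F) (hs1 : IsElemSymmComb s1) (hs1ne : s1 ≠ 0)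
    (lam : F) (hlam : lam ≠ 0) :
    (Set.ncard {x : Fin m → F | Function.Injective x ∧
        eval x (s1 * vand F m + C lam * s1) = 0} : ℝ)
      ≤ (Pnum q m : ℝ) / ((q : ℝ) - 1)
        + (m : ℝ) * (Pnum (q - 1) (m - 1) : ℝ) := by
  classical
  obtain ⟨a, ha⟩ := hs1
  set a' : ℕ → F := fun i => if h : i < m + 1 then a ⟨i, h⟩ else 0 with ha'
  have hq2 : 2 ≤ q := by
    obtain ⟨p, n, hp, hodd, hn, rfl⟩ := hq
    have hp2 : 2 ≤ p := hp.two_le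
    calc 2 ≤ p := hp2
      _ = p ^ 1 := (pow_one p).symm
      _ ≤ p ^ n := Nat.pow_le_pow_right (by omega) hn
  -- nonzero coefficient
  have hanz : ∃ i < m + 1, a' i ≠ 0 := by
    by_contra hcon
    push_neg at hcon
    apply hs1ne
    rw [ha]
    apply Finset.sum_eq_zero
    intro i _
    have : a i = 0 := by
      have h2 := hcon i i.isLt
      rw [ha'] at h2
      have hi := i.isLt
      simp at h2
      exact h2 (by omega)
    rw [this, map_zero, zero_mul]
  -- the zero set is contained in the union
  set A : Set (Fin m → F) := {x | Function.Injective x ∧ eval x s1 = 0} with hA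
  set B : Set (Fin m → F) := {x | Function.Injective x ∧ eval x (vand F m) = -lam} with hB
  have hsub : {x : Fin m → F | Function.Injective x ∧
      eval x (s1 * vand F m + C lam * s1) = 0} ⊆ A ∪ B := by
    intro x hx
    obtain ⟨hxi, hxz⟩ := hx
    rw [map_add, map_mul, map_mul, eval_C] at hxz
    have : eval x s1 * (eval x (vand F m) + lam) = 0 := by linear_combination hxz
    rcases mul_eq_zero.1 this with h | h
    · exact Or.inl ⟨hxi, h⟩
    · exact Or.inr ⟨hxi, eq_neg_of_add_eq_zero_left h⟩
  -- card bounds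
  have hAcard : (A.ncard : ℝ) ≤ (m : ℝ) * (Pnum (q - 1) (m - 1) : ℝ) := by
    have hAfin : A = ↑(Finset.univ.filter
        (fun x : Fin m → F => Function.Injective x ∧ Scomb m a' x = 0)) := by
      ext x
      simp only [hA, Set.mem_setOf_eq, Finset.coe_filter, Finset.mem_univ, true_and]
      rw [ha, eval_comb_eq_Scomb]
    rw [hAfin, Set.ncard_coe_finset]
    have hzb := zeros_bound F m a' hanz
    rw [hcard] at hzb
    calc (#(Finset.univ.filter
          (fun x : Fin m → F => Function.Injective x ∧ Scomb m a' x = 0)) : ℝ)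
        ≤ ((m * Nat.descFactorial (q - 1) (m - 1) : ℕ) : ℝ) := Nat.cast_le.2 hzb
      _ = (m : ℝ) * (Pnum (q - 1) (m - 1) : ℝ) := by rw [Pnum_eq]; push_cast; ring
  have hBcard : (B.ncard : ℝ) ≤ (Pnum q m : ℝ) / ((q : ℝ) - 1) := by
    have hBfin : B = ↑(Finset.univ.filter
        (fun x : Fin m → F => Function.Injective x ∧ eval x (vand F m) = -lam)) := by
      ext x
      simp [hB]
    have hc := vand_level_count F m (by rw [hcard]; exact hgcd) (-lam) (neg_ne_zero.2 hlam)
    rw [hcard] at hc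
    rw [hBfin, Set.ncard_coe_finset]
    have hpos : (0 : ℝ) < (q : ℝ) - 1 := by
      have : (2 : ℝ) ≤ (q : ℝ) := by exact_mod_cast hq2
      linarith
    rw [le_div_iff₀ hpos]
    calc (#(Finset.univ.filter
          (fun x : Fin m → F => Function.Injective x ∧ eval x (vand F m) = -lam)) : ℝ)
          * ((q : ℝ) - 1)
        = ((#(Finset.univ.filter
            (fun x : Fin m → F => Function.Injective x ∧ eval x (vand F m) = -lam))
            * (q - 1) : ℕ) : ℝ) := by
          push_cast [Nat.cast_sub (by omega : 1 ≤ q)]; ring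
      _ ≤ ((q.descFactorial m : ℕ) : ℝ) := Nat.cast_le.2 hc
      _ = (Pnum q m : ℝ) := by rw [Pnum_eq]
  calc (Set.ncard {x : Fin m → F | Function.Injective x ∧
        eval x (s1 * vand F m + C lam * s1) = 0} : ℝ)
      ≤ ((A ∪ B).ncard : ℝ) := Nat.cast_le.2 (Set.ncard_le_ncard hsub (Set.toFinite _))
    _ ≤ ((A.ncard + B.ncard : ℕ) : ℝ) := Nat.cast_le.2 (Set.ncard_union_le A B)
    _ ≤ (Pnum q m : ℝ) / ((q : ℝ) - 1) + (m : ℝ) * (Pnum (q - 1) (m - 1) : ℝ) := by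
        push_cast
        linarith
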